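/- arXiv:1709.09629 — 3 statements merged into one kernel-verified Lean document; each statement's English description precedes it below -/
import Mathlib

section
/- For all integers k \geq 1, in the Koszul dual algebra at the prime 2 with relations R^a R^b = \sum_c \binom{b-1-c}{a-2c} R^{a+b-c} R^c (mod 2) for a < 2b, one has R^{2^{k+1}+1} R^{2^k + 1} = 0 and R^{2^{k+1}} R^{2^k+1} = R^{2^{k+1}+1} R^{2^k}. -/
/-- Mod-2 binomial coefficient `C(b-1-c, a-2c)`, with the convention that it
vanishes unless both arguments are nonnegative. -/
def koszulCoeff (a b c : ℤ) : ZMod 2 :=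
  if 0 ≤ b - 1 - c ∧ 0 ≤ a - 2 * c then
    ((b - 1 - c).toNat.choose (a - 2 * c).toNat : ZMod 2)
  else 0

/-- A family of elements `R a` (for positive `a`) of an `F₂`-algebra satisfies the
Adem-type relations of the Koszul dual algebra at the prime 2:
`R^a R^b = ∑_c C(b-1-c, a-2c) R^{a+b-c} R^c` (mod 2) whenever `a < 2b`, the sum
ranging over integers `c` with `a + b - c ≥ 2c`. -/
def SatisfiesAdem {A : Type*} [Ring A] [Algebra (ZMod 2) A] (R : ℤ → A) : Prop :=
  ∀ a b : ℤ, 0 < a → 0 < b → a < 2 * b →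
    R a * R b = ∑ c ∈ Finset.Icc (a - b) (a + b),
      if 2 * c ≤ a + b - c then koszulCoeff a b c • (R (a + b - c) * R c) else 0


/-- For all `k ≥ 1`, in the Koszul dual algebra at the prime 2,
`R^{2^{k+1}+1} R^{2^k+1} = 0` and `R^{2^{k+1}} R^{2^k+1} = R^{2^{k+1}+1} R^{2^k}`. -/
theorem stmt_3 {A : Type*} [Ring A] [Algebra (ZMod 2) A] (R : ℤ → A)
    (h : SatisfiesAdem R) (k : ℕ) (hk : 1 ≤ k) :
    R ((2 : ℤ) ^ (k + 1) + 1) * R ((2 : ℤ) ^ k + 1) = 0 ∧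
      R ((2 : ℤ) ^ (k + 1)) * R ((2 : ℤ) ^ k + 1) =
        R ((2 : ℤ) ^ (k + 1) + 1) * R ((2 : ℤ) ^ k) := by
  set n : ℤ := 2 ^ k with hn
  have hn2 : (2 : ℤ) ≤ n := by
    have : (2 : ℤ) ^ 1 ≤ 2 ^ k := pow_le_pow_right₀ (by norm_num) hk
    simpa [hn] using this
  have h2 : (2 : ℤ) ^ (k + 1) = 2 * n := by rw [pow_succ, hn]; ring
  constructor
  · rw [h2]
    rw [h (2 * n + 1) (n + 1) (by linarith) (by linarith) (by linarith)]
    apply Finset.sum_eq_zero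
    intro c hc
    split_ifs with hcond
    · have hc3 : c ≤ n := by omega
      have hz : koszulCoeff (2 * n + 1) (n + 1) c = 0 := by
        unfold koszulCoeff
        split_ifs with hpos
        · rw [Nat.choose_eq_zero_of_lt (by omega)]
          simp
        · rfl
      rw [hz, zero_smul]
    · rfl
  · rw [h2]
    rw [h (2 * n) (n + 1) (by linarith) (by linarith) (by linarith)]
    rw [Finset.sum_eq_single n]
    · rw [if_pos (by omega)]
      have h1 : koszulCoeff (2 * n) (n + 1) n = 1 := by
        unfold koszulCoeff
        rw [if_pos (by constructor <;> omega)]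
        have e1 : n + 1 - 1 - n = 0 := by ring
        have e2 : 2 * n - 2 * n = 0 := by ring
        rw [e1, e2]
        simp
      rw [h1, one_smul]
      have e3 : 2 * n + (n + 1) - n = 2 * n + 1 := by ring
      rw [e3]
    · intro c hc hcn
      split_ifs with hcond
      · have hz : koszulCoeff (2 * n) (n + 1) c = 0 := by
          unfold koszulCoeff
          split_ifs with hpos
          · rw [Nat.choose_eq_zero_of_lt (by omega)]
            simp
          · rfl
        rw [hz, zero_smul]
      · rfl
    · intro hmem
      exfalso
      exact hmem (Finset.mem_Icc.mpr ⟨by omega, by omega⟩)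
end

section
/- Let d be the F_2[v_0]-linear differential on the free F_2[v_0]-module with basis the admissible monomials R^{a_1}\cdots R^{a_m} y_1 (a_i \geq 2a_{i+1}, a_m \geq 4) not ending in R^5, R^9R^4, R^{17}R^8R^4, ..., defined by d(v_0^k R^{a_1}\cdots R^{a_m} y_1) = 0 if a_1 is odd and = v_0^{k+1} R^{a_1+1} R^{a_2} \cdots R^{a_m} y_1 if a_1 is even. Then d^2 = 0, and the homology is: (i) F_2 summands (annihilated by v_0) for each basis monomial with a_1 odd, and (ii) free F_2[v_0] summands for each of y_1, R^4 y_1, R^8 R^4 y_1, R^{16} R^8 R^4 y_1, .... -/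
open scoped Classical

noncomputable section

/-- The base ring `F₂[v₀]`, with `v₀ = X`. -/
abbrev Pv : Type := Polynomial (ZMod 2)

/-- A monomial `R^{a_1} ⋯ R^{a_m} y₁`, recorded as the list `[a_1, …, a_m]`, is
admissible if `a_i ≥ 2 a_{i+1}` and `a_m ≥ 4`. -/
def AdmissibleY1 (l : List ℤ) : Prop :=
  l.Chain' (fun x y => 2 * y ≤ x) ∧ ∀ x : ℤ, l.getLast? = some x → 4 ≤ x

/-- The `k`-th forbidden ending `(2^k+1, 2^{k-1}, …, 8, 4)` for `k ≥ 2`: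
`(5)`, `(9,4)`, `(17,8,4)`, `(33,16,8,4)`, …. -/
def forbSeq (k : ℕ) : List ℤ :=
  ((2 : ℤ) ^ k + 1) :: (List.range (k - 2)).map fun j => (2 : ℤ) ^ (k - 1 - j)

/-- A monomial ends in a forbidden sequence. -/
def HasForbiddenEnding (l : List ℤ) : Prop :=
  ∃ k : ℕ, 2 ≤ k ∧ (forbSeq k).IsSuffix l

/-- The allowed basis monomials: admissible, not ending in a forbidden sequence. -/
def AllowedY1 (l : List ℤ) : Prop := AdmissibleY1 l ∧ ¬ HasForbiddenEnding l

/-- The index set of allowed basis monomials `R^{a_1} ⋯ R^{a_m} y₁`. -/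
abbrev AllowedIdx := {l : List ℤ // AllowedY1 l}

/-- The free `F₂[v₀]`-module on the allowed basis monomials. -/
abbrev Vmod : Type := AllowedIdx →₀ Pv

/-- The value of the differential on a basis monomial: `0` if `a_1` is odd (or
the monomial is `y₁` itself), and `v₀ · R^{a_1+1} R^{a_2} ⋯ R^{a_m} y₁` if
`a_1` is even (the target being `0` when `R^{a_1+1} ⋯` has a forbidden ending). -/
def dBasis : AllowedIdx → Vmod
  | ⟨[], _⟩ => 0
  | ⟨a :: t, _⟩ =>
      if Odd a then 0
      else if h : AllowedY1 ((a + 1) :: t) then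
        (Polynomial.X : Pv) • Finsupp.single (⟨(a + 1) :: t, h⟩ : AllowedIdx) (1 : Pv)
      else 0

/-- The `F₂[v₀]`-linear differential, so that
`d(v₀^k R^{a_1} ⋯ R^{a_m} y₁) = 0` if `a_1` is odd and
`= v₀^{k+1} R^{a_1+1} R^{a_2} ⋯ R^{a_m} y₁` if `a_1` is even. -/
def dMap : Vmod →ₗ[Pv] Vmod :=
  Finsupp.lsum Pv fun s => LinearMap.toSpanSingleton Pv Vmod (dBasis s)

/-- The `m`-th tower generator `[2^{m+1}, …, 8, 4]`: `y₁`, `R^4 y₁`,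
`R^8 R^4 y₁`, `R^{16} R^8 R^4 y₁`, …. -/
def towerList (m : ℕ) : List ℤ := (List.range m).map fun j => (2 : ℤ) ^ (m + 1 - j)

/-! The basis splits into three kinds of monomials: those with `a_1` odd, the towers, and the
rest. Raising `a_1` by one is a bijection from the rest onto the odd ones: it fails on a tower
`R^{2^{m+2}} R^{2^{m+1}} ⋯ R^4 y₁` exactly because its target is the forbidden
`R^{2^{m+2}+1} R^{2^{m+1}} ⋯ R^4 y₁`, and on an odd monomial lowering `a_1` never produces a
tower or a forbidden ending. Hence `d` sends `s ↦ v₀ (s + 1)` on the rest and kills the other two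
kinds, so the complex is a sum of copies of `F₂[v₀] --v₀--> F₂[v₀]`, one per odd monomial, and of
`F₂[v₀]` with zero differential, one per tower. -/

lemma towerList_succ (m : ℕ) : towerList (m + 1) = 2 ^ (m + 2) :: towerList m := by
  simp only [towerList, List.range_succ_eq_map, List.map_cons, List.map_map]
  congr 2
  ext j
  simp only [Function.comp_apply]
  congr 1
  omega

lemma forbSeq_add_two (m : ℕ) : forbSeq (m + 2) = (2 ^ (m + 2) + 1) :: towerList m := by
  simp only [forbSeq, towerList, Nat.add_sub_cancel]
  congr 2

lemma exists_cons_eq_towerList_iff {a : ℤ} {t : List ℤ} :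
    (∃ m, a :: t = towerList m) ↔ ∃ m, a = 2 ^ (m + 2) ∧ t = towerList m := by
  constructor
  · rintro ⟨_ | m, hm⟩
    · simp [towerList] at hm
    · rw [towerList_succ, List.cons.injEq] at hm
      exact ⟨m, hm⟩
  · rintro ⟨m, rfl, rfl⟩
    exact ⟨m + 1, (towerList_succ m).symm⟩

lemma hasForbiddenEnding_cons_iff {a : ℤ} {t : List ℤ} :
    HasForbiddenEnding (a :: t) ↔
      (∃ m, a = 2 ^ (m + 2) + 1 ∧ t = towerList m) ∨ HasForbiddenEnding t := by
  constructor
  · rintro ⟨k, hk, hsuf⟩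
    obtain ⟨m, rfl⟩ : ∃ m, k = m + 2 := ⟨k - 2, by omega⟩
    rcases List.suffix_cons_iff.mp hsuf with heq | hsuf
    · rw [forbSeq_add_two, List.cons.injEq] at heq
      exact .inl ⟨m, heq.1.symm, heq.2.symm⟩
    · exact .inr ⟨m + 2, hk, hsuf⟩
  · rintro (⟨m, rfl, rfl⟩ | ⟨k, hk, hsuf⟩)
    · exact ⟨m + 2, by omega, by rw [forbSeq_add_two]⟩
    · exact ⟨k, hk, hsuf.trans (List.suffix_cons a t)⟩

lemma even_two_pow_add_two (m : ℕ) : Even ((2 : ℤ) ^ (m + 2)) :=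
  even_two.pow_of_ne_zero (by omega)

-- The lower bounds `2 a_2` and `4` on `a_1` are even.
lemma AdmissibleY1.cons_of_even_le {a b : ℤ} {t : List ℤ} (h : AdmissibleY1 (a :: t))
    (hab : ∀ n : ℤ, Even n → n ≤ a → n ≤ b) : AdmissibleY1 (b :: t) := by
  obtain ⟨hchain, hlast⟩ := h
  replace hchain := List.isChain_cons.mp hchain
  refine ⟨List.isChain_cons.mpr
    ⟨fun y hy => hab _ (even_two_mul y) (hchain.1 y hy), hchain.2⟩, ?_⟩
  cases t with
  | nil =>
    simp only [List.getLast?_singleton, Option.some.injEq, forall_eq']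
    exact hab 4 (by decide) (hlast a rfl)
  | cons y t => simpa only [List.getLast?_cons_cons] using hlast

lemma AllowedY1.sub_one {b : ℤ} {t : List ℤ} (h : AllowedY1 (b :: t)) (hb : Odd b) :
    AllowedY1 ((b - 1) :: t) := by
  obtain ⟨c, rfl⟩ := hb
  refine ⟨h.1.cons_of_even_le fun n ⟨k, hk⟩ hn => by omega, fun hforb => h.2 ?_⟩
  rcases hasForbiddenEnding_cons_iff.mp hforb with ⟨m, hm, -⟩ | hforb
  · obtain ⟨k, hk⟩ := even_two_pow_add_two m
    omega
  · exact hasForbiddenEnding_cons_iff.mpr (.inr hforb)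

lemma AllowedY1.not_exists_sub_one_eq_towerList {b : ℤ} {t : List ℤ} (h : AllowedY1 (b :: t)) :
    ¬ ∃ m, (b - 1) :: t = towerList m := by
  rw [exists_cons_eq_towerList_iff]
  rintro ⟨m, hm, rfl⟩
  exact h.2 (hasForbiddenEnding_cons_iff.mpr (.inl ⟨m, by omega, rfl⟩))

lemma AllowedY1.add_one {a : ℤ} {t : List ℤ} (h : AllowedY1 (a :: t))
    (htow : ¬ ∃ m, a :: t = towerList m) : AllowedY1 ((a + 1) :: t) := by
  refine ⟨h.1.cons_of_even_le fun n _ hn => by omega, fun hforb => ?_⟩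
  rcases hasForbiddenEnding_cons_iff.mp hforb with ⟨m, hm, rfl⟩ | hforb
  · exact htow (exists_cons_eq_towerList_iff.mpr ⟨m, by omega, rfl⟩)
  · exact h.2 (hasForbiddenEnding_cons_iff.mpr (.inr hforb))

abbrev OddHead (s : AllowedIdx) : Prop := ∃ (a : ℤ) (t : List ℤ), s.1 = a :: t ∧ Odd a

abbrev IsTower (s : AllowedIdx) : Prop := ∃ m : ℕ, s.1 = towerList m

lemma List.modifyHead_add_one_sub_one (l : List ℤ) :
    (l.modifyHead (· + 1)).modifyHead (· - 1) = l := by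
  cases l <;> simp

lemma List.modifyHead_sub_one_add_one (l : List ℤ) :
    (l.modifyHead (· - 1)).modifyHead (· + 1) = l := by
  cases l <;> simp

def predIdx (u : AllowedIdx) (hu : OddHead u) : AllowedIdx :=
  ⟨u.1.modifyHead (· - 1), by
    obtain ⟨b, t, hbt, hb⟩ := hu
    simpa only [hbt, List.modifyHead_cons] using (hbt ▸ u.2 : AllowedY1 (b :: t)).sub_one hb⟩

lemma predIdx_injective {u v : AllowedIdx} (hu : OddHead u) (hv : OddHead v)
    (h : predIdx u hu = predIdx v hv) : u = v := by
  have := congrArg (fun s : AllowedIdx => s.1.modifyHead (· + 1)) h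
  simpa only [predIdx, List.modifyHead_sub_one_add_one, ← Subtype.ext_iff] using this

lemma not_oddHead_predIdx (u : AllowedIdx) (hu : OddHead u) : ¬ OddHead (predIdx u hu) := by
  obtain ⟨b, t, hbt, c, rfl⟩ := hu
  rintro ⟨a, t', hat, d, rfl⟩
  simp only [predIdx, hbt, List.modifyHead_cons, List.cons.injEq] at hat
  omega

lemma not_isTower_predIdx (u : AllowedIdx) (hu : OddHead u) : ¬ IsTower (predIdx u hu) := by
  obtain ⟨b, t, hbt, -⟩ := hu
  simpa only [IsTower, predIdx, hbt, List.modifyHead_cons] using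
    (hbt ▸ u.2 : AllowedY1 (b :: t)).not_exists_sub_one_eq_towerList

lemma exists_predIdx_eq {s : AllowedIdx} (hodd : ¬ OddHead s) (htow : ¬ IsTower s) :
    ∃ u hu, predIdx u hu = s := by
  obtain ⟨_ | ⟨a, t⟩, hs⟩ := s
  · exact absurd ⟨0, rfl⟩ htow
  have ha : Even a := Int.not_odd_iff_even.mp fun ha => hodd ⟨a, t, rfl, ha⟩
  exact ⟨⟨(a + 1) :: t, hs.add_one htow⟩, ⟨a + 1, t, rfl, ha.add_one⟩,
    Subtype.ext (List.modifyHead_add_one_sub_one (a :: t))⟩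

lemma not_isTower_of_oddHead {s : AllowedIdx} (h : OddHead s) : ¬ IsTower s := by
  obtain ⟨a, t, hat, ha⟩ := h
  rintro ⟨m, hm⟩
  obtain ⟨m, rfl, -⟩ := exists_cons_eq_towerList_iff.mp ⟨m, hat.symm.trans hm⟩
  exact Int.not_odd_iff_even.mpr (even_two_pow_add_two m) ha

/-- The basis monomial `u` occurs in `d s`. -/
def Raises (s u : AllowedIdx) : Prop := ∃ a t, s.1 = a :: t ∧ Even a ∧ u.1 = (a + 1) :: t

lemma raises_iff_eq_predIdx {s u : AllowedIdx} (hu : OddHead u) :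
    Raises s u ↔ s = predIdx u hu := by
  obtain ⟨b, t, hbt, c, rfl⟩ := hu
  simp only [Raises, Subtype.ext_iff, predIdx, hbt, List.modifyHead_cons, List.cons.injEq]
  constructor
  · rintro ⟨a, t', hs, -, hb, rfl⟩
    rw [hs, List.cons.injEq]
    exact ⟨by omega, rfl⟩
  · intro hs
    exact ⟨_, t, hs, ⟨c, by ring⟩, by ring, rfl⟩

lemma not_raises_of_not_oddHead {s u : AllowedIdx} (hu : ¬ OddHead u) : ¬ Raises s u :=
  fun ⟨a, t, _, ha, hut⟩ => hu ⟨a + 1, t, hut, ha.add_one⟩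

lemma dBasis_apply (s u : AllowedIdx) :
    dBasis s u = if Raises s u then Polynomial.X else 0 := by
  obtain ⟨_ | ⟨a, t⟩, hs⟩ := s
  · simp [dBasis, Raises]
  by_cases ha : Odd a
  · simp [dBasis, Raises, ha]
  by_cases hnext : AllowedY1 ((a + 1) :: t)
  · simp [dBasis, Raises, ha, hnext, Finsupp.single_apply, Subtype.ext_iff, eq_comm,
      Int.not_odd_iff_even.mp ha]
  · simp only [dBasis, ha, hnext, if_false, dite_false, Finsupp.coe_zero, Pi.zero_apply]
    refine (if_neg ?_).symm
    rintro ⟨_, _, hst, -, hu⟩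
    rw [List.cons.injEq] at hst
    obtain ⟨rfl, rfl⟩ := hst
    exact hnext (hu ▸ u.2)

lemma dMap_apply (f : Vmod) (u : AllowedIdx) :
    dMap f u = f.sum fun s p => p * dBasis s u := by
  simp [dMap, Finsupp.sum_apply]

lemma dMap_apply_of_oddHead (f : Vmod) {u : AllowedIdx} (hu : OddHead u) :
    dMap f u = Polynomial.X * f (predIdx u hu) := by
  simp [dMap_apply, dBasis_apply, raises_iff_eq_predIdx hu, mul_comm]

lemma dMap_apply_of_not_oddHead (f : Vmod) {u : AllowedIdx} (hu : ¬ OddHead u) :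
    dMap f u = 0 := by
  simp [dMap_apply, dBasis_apply, not_raises_of_not_oddHead hu]

lemma dMap_eq_zero_iff (f : Vmod) :
    dMap f = 0 ↔ ∀ s, ¬ OddHead s → ¬ IsTower s → f s = 0 := by
  constructor
  · intro hf s hodd htow
    obtain ⟨u, hu, rfl⟩ := exists_predIdx_eq hodd htow
    have hfu := DFunLike.congr_fun hf u
    rw [dMap_apply_of_oddHead f hu, Finsupp.coe_zero, Pi.zero_apply] at hfu
    exact (mul_eq_zero.mp hfu).resolve_left Polynomial.X_ne_zero
  · refine fun hf => Finsupp.ext fun u => ?_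
    by_cases hu : OddHead u
    · simp [dMap_apply_of_oddHead f hu,
        hf _ (not_oddHead_predIdx u hu) (not_isTower_predIdx u hu)]
    · exact dMap_apply_of_not_oddHead f hu

lemma mem_range_dMap_iff (x : Vmod) :
    x ∈ LinearMap.range dMap ↔
      (∀ s, ¬ OddHead s → x s = 0) ∧ ∀ s, OddHead s → Polynomial.X ∣ x s := by
  constructor
  · rintro ⟨y, rfl⟩
    exact ⟨fun s hs => dMap_apply_of_not_oddHead y hs,
      fun s hs => (dMap_apply_of_oddHead y hs).symm ▸ dvd_mul_right _ _⟩
  rintro ⟨hzero, hdvd⟩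
  let predEmb : {u // OddHead u} ↪ AllowedIdx :=
    ⟨fun u => predIdx u.1 u.2, fun u v h => Subtype.ext (predIdx_injective u.2 v.2 h)⟩
  refine ⟨((x.subtypeDomain OddHead).mapRange Polynomial.divX Polynomial.divX_zero).embDomain
    predEmb, Finsupp.ext fun u => ?_⟩
  by_cases hu : OddHead u
  · have hcoeff : (x u).coeff 0 = 0 := Polynomial.X_dvd_iff.mp (hdvd u hu)
    rw [dMap_apply_of_oddHead _ hu, show predIdx u hu = predEmb ⟨u, hu⟩ from rfl,
      Finsupp.embDomain_apply_self, Finsupp.mapRange_apply, Finsupp.subtypeDomain_apply]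
    simpa [hcoeff] using Polynomial.X_mul_divX_add (x u)
  · rw [dMap_apply_of_not_oddHead _ hu, hzero u hu]

def homologyMap : LinearMap.ker dMap →ₗ[Pv]
    (({s : AllowedIdx // OddHead s} →₀ Pv ⧸ Ideal.span {Polynomial.X (R := ZMod 2)}) ×
      ({s : AllowedIdx // IsTower s} →₀ Pv)) :=
  ((Finsupp.mapRange.linearMap (Ideal.span {(Polynomial.X : Pv)}).mkQ ∘ₗ
      Finsupp.lsubtypeDomain (R := Pv) (M := Pv) {s : AllowedIdx | OddHead s}).prod
    (Finsupp.lsubtypeDomain (R := Pv) (M := Pv) {s : AllowedIdx | IsTower s})) ∘ₗ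
    (LinearMap.ker dMap).subtype

lemma homologyMap_apply_fst (x : LinearMap.ker dMap) (u : {s // OddHead s}) :
    (homologyMap x).1 u = Ideal.Quotient.mk _ ((x : Vmod) u) :=
  rfl

lemma homologyMap_apply_snd (x : LinearMap.ker dMap) (u : {s // IsTower s}) :
    (homologyMap x).2 u = (x : Vmod) u :=
  rfl

lemma homologyMap_eq_zero_iff (x : LinearMap.ker dMap) :
    homologyMap x = 0 ↔
      (∀ s, OddHead s → Polynomial.X ∣ (x : Vmod) s) ∧
        ∀ s, IsTower s → (x : Vmod) s = 0 := by
  simp only [Prod.ext_iff, Finsupp.ext_iff, homologyMap_apply_fst, homologyMap_apply_snd,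
    Prod.fst_zero, Prod.snd_zero, Finsupp.coe_zero, Pi.zero_apply, Ideal.Quotient.eq_zero_iff_mem,
    Ideal.mem_span_singleton, Subtype.forall]

lemma homologyMap_surjective : Function.Surjective homologyMap := by
  rintro ⟨g, h⟩
  obtain ⟨g', rfl⟩ := Finsupp.mapRange_surjective _ (map_zero _)
    (Submodule.mkQ_surjective (Ideal.span {Polynomial.X (R := ZMod 2)})) g
  have hcycle : dMap (g'.extendDomain + h.extendDomain) = 0 :=
    (dMap_eq_zero_iff _).mpr fun s hodd htow => by simp [hodd, htow]
  refine ⟨⟨_, hcycle⟩, ?_⟩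
  ext u : 2
  · simp [homologyMap_apply_fst, u.2, not_isTower_of_oddHead u.2]
  · have hu : ¬ OddHead u := fun h => not_isTower_of_oddHead h u.2
    simp [homologyMap_apply_snd, u.2, hu]

lemma ker_homologyMap :
    LinearMap.ker homologyMap = (LinearMap.range dMap).comap (LinearMap.ker dMap).subtype := by
  ext x
  have hlive := (dMap_eq_zero_iff x).mp x.2
  rw [LinearMap.mem_ker, homologyMap_eq_zero_iff, Submodule.mem_comap,
    Submodule.subtype_apply, mem_range_dMap_iff, and_comm]
  refine and_congr_left' ⟨fun htow s hodd => ?_, fun hzero s htow => hzero s ?_⟩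
  · by_cases htow' : IsTower s
    exacts [htow s htow', hlive s hodd htow']
  · exact fun hodd => not_isTower_of_oddHead hodd htow

/-- `d² = 0`, and the homology of `(Vmod, d)` is a direct sum of: `F₂`-summands
(copies of `F₂[v₀]/(v₀)`) indexed by the allowed basis monomials with `a_1` odd,
and free `F₂[v₀]`-summands indexed by the tower monomials `y₁`, `R^4 y₁`,
`R^8 R^4 y₁`, `R^{16} R^8 R^4 y₁`, …. -/
theorem stmt_12 :
    (∀ x : Vmod, dMap (dMap x) = 0) ∧
      ∃ φ : LinearMap.ker dMap →ₗ[Pv]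
          (({s : AllowedIdx // ∃ (a : ℤ) (t : List ℤ), s.1 = a :: t ∧ Odd a} →₀
              Pv ⧸ Ideal.span {Polynomial.X (R := ZMod 2)}) ×
            ({s : AllowedIdx // ∃ m : ℕ, s.1 = towerList m} →₀ Pv)),
        Function.Surjective φ ∧
          LinearMap.ker φ =
            (LinearMap.range dMap).comap (LinearMap.ker dMap).subtype :=
  ⟨fun x => (dMap_eq_zero_iff _).mpr fun _ hodd _ => dMap_apply_of_not_oddHead x hodd,
    homologyMap, homologyMap_surjective, ker_homologyMap⟩

end
end

section
/- If R^{a_1}\cdots R^{a_m} is an admissible monomial (a_i \geq 2a_{i+1}) with a_1 even and R^{a_1+1} R^{a_2} \cdots R^{a_m} ends in one of the forbidden sequences R^5, R^9 R^4, R^{17} R^8 R^4, R^{33}R^{16}R^8R^4, ..., but R^{a_1}\cdots R^{a_m} itself does not end in a forbidden sequence, then R^{a_1}\cdots R^{a_m} is one of R^4, R^8 R^4, R^{16} R^8 R^4, R^{32}R^{16}R^8R^4, .... -/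
/-- A monomial `R^{a_1} ⋯ R^{a_m}`, recorded as the list `[a_1, …, a_m]`, is
admissible if `a_i ≥ 2 a_{i+1}` and `a_m ≥ 4`. -/
def AdmissibleMono (l : List ℤ) : Prop :=
  l.Chain' (fun x y => 2 * y ≤ x) ∧ ∀ x : ℤ, l.getLast? = some x → 4 ≤ x

/-- If `R^{a_1} ⋯ R^{a_m}` is admissible with `a_1` even, and
`R^{a_1+1} R^{a_2} ⋯ R^{a_m}` ends in a forbidden sequence while
`R^{a_1} ⋯ R^{a_m}` itself does not, then `R^{a_1} ⋯ R^{a_m}` is one of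
`R^4`, `R^8 R^4`, `R^{16} R^8 R^4`, `R^{32} R^{16} R^8 R^4`, …. -/
theorem stmt_13 (a : ℤ) (t : List ℤ) (hadm : AdmissibleMono (a :: t))
    (heven : Even a) (h₁ : HasForbiddenEnding ((a + 1) :: t))
    (h₂ : ¬ HasForbiddenEnding (a :: t)) :
    ∃ m : ℕ, 1 ≤ m ∧ a :: t = towerList m := by
  obtain ⟨k, hk, pre, hpre⟩ := h₁
  cases pre with
  | cons b pre' =>
    rw [List.cons_append] at hpre
    injection hpre with h1 h2
    exact absurd ⟨k, hk, a :: pre', by rw [List.cons_append, h2]⟩ h₂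
  | nil =>
    rw [List.nil_append] at hpre
    unfold forbSeq at hpre
    injection hpre with h1 h2
    have ha : a = 2 ^ k := by omega
    refine ⟨k - 1, by omega, ?_⟩
    have hk1 : k - 1 = (k - 2) + 1 := by omega
    rw [← h2, ha]
    unfold towerList
    rw [hk1, List.range_succ_eq_map, List.map_cons, List.map_map]
    congr 1
    · congr 1
      omega
    · apply List.map_congr_left
      intro j _
      simp only [Function.comp]
      congr 1
      omega
end
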